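/- Let X and Y be random variables taking finitely many values, with Y taking values y₁, …, y_K. Then E[max{X − η, 0}] ≤ E[max{Y − η, 0}] holds for all η ∈ ℝ if and only if it holds for η ∈ {y₁, …, y_K}. -/

import Mathlib

/-!
Both `η ↦ E[(X - η)⁺]` and `η ↦ E[(Y - η)⁺]` are convex, nonincreasing and piecewise linear;
the one for `Y` vanishes beyond `max Y`, has the steepest possible slope `-1` below `min Y`,
and is affine between consecutive values of `Y`. So the inequality at any `η` follows from the
inequality at the value(s) of `Y` bracketing `η`: by monotonicity above `max Y`, by the slope
comparison below `min Y`, and by convexity against affinity in between.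
-/

open Finset

section Pointwise

variable {a b c η m : ℝ}

lemma max_sub_zero_le_add_sub (h : η ≤ m) : max (c - η) 0 ≤ max (c - m) 0 + (m - η) := by
  rcases le_total c η with hc | hc
  · rw [max_eq_right (by linarith)]
    linarith [le_max_right (c - m) 0]
  · rw [max_eq_left (by linarith)]
    linarith [le_max_left (c - m) 0]

lemma sub_mul_max_sub_zero_le (ha : a ≤ η) (hb : η ≤ b) :
    (b - a) * max (c - η) 0 ≤ (b - η) * max (c - a) 0 + (η - a) * max (c - b) 0 := by
  have hca := mul_le_mul_of_nonneg_left (le_max_left (c - a) 0) (sub_nonneg.2 hb)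
  have hcb := mul_le_mul_of_nonneg_left (le_max_left (c - b) 0) (sub_nonneg.2 ha)
  have hca₀ := mul_nonneg (sub_nonneg.2 hb) (le_max_right (c - a) 0)
  have hcb₀ := mul_nonneg (sub_nonneg.2 ha) (le_max_right (c - b) 0)
  rcases le_total c η with hc | hc
  · rw [max_eq_right (by linarith)]
    linarith
  · rw [max_eq_left (by linarith)]
    linarith

lemma sub_mul_max_sub_zero_eq (ha : a ≤ η) (hb : η ≤ b) (hc : c ≤ a ∨ b ≤ c) :
    (b - a) * max (c - η) 0 = (b - η) * max (c - a) 0 + (η - a) * max (c - b) 0 := by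
  rcases hc with hc | hc
  · simp only [max_eq_right (by linarith : c - η ≤ 0), max_eq_right (by linarith : c - a ≤ 0),
      max_eq_right (by linarith : c - b ≤ 0)]
    ring
  · simp only [max_eq_left (by linarith : 0 ≤ c - η), max_eq_left (by linarith : 0 ≤ c - a),
      max_eq_left (by linarith : 0 ≤ c - b)]
    ring

end Pointwise

/-- `E[(Z - η)⁺]` for the random variable `Z = z` on atoms of weights `p`. -/
def expectedExcess {ι : Type*} [Fintype ι] (p z : ι → ℝ) (η : ℝ) : ℝ :=
  ∑ k, p k * max (z k - η) 0

namespace expectedExcess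

variable {ι : Type*} [Fintype ι] {p z : ι → ℝ} {a b η m : ℝ}

lemma antitone (hp : ∀ k, 0 ≤ p k) : Antitone (expectedExcess p z) := fun _ _ h =>
  sum_le_sum fun k _ => mul_le_mul_of_nonneg_left (max_le_max (by linarith) le_rfl) (hp k)

lemma eq_zero (hz : ∀ k, z k ≤ η) : expectedExcess p z η = 0 :=
  sum_eq_zero fun k _ => by rw [max_eq_right (sub_nonpos.2 (hz k)), mul_zero]

lemma le_add (hp : ∀ k, 0 ≤ p k) (h : η ≤ m) :
    expectedExcess p z η ≤ expectedExcess p z m + (m - η) * ∑ k, p k := by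
  simp only [expectedExcess, mul_sum, ← sum_add_distrib]
  exact sum_le_sum fun k _ => by
    nlinarith [mul_le_mul_of_nonneg_left (max_sub_zero_le_add_sub (c := z k) h) (hp k)]

lemma eq_add (h : η ≤ m) (hz : ∀ k, m ≤ z k) :
    expectedExcess p z η = expectedExcess p z m + (m - η) * ∑ k, p k := by
  simp only [expectedExcess, mul_sum, ← sum_add_distrib]
  refine sum_congr rfl fun k _ => ?_
  rw [max_eq_left (by linarith [hz k]), max_eq_left (by linarith [hz k])]
  ring

lemma sub_mul_le (hp : ∀ k, 0 ≤ p k) (ha : a ≤ η) (hb : η ≤ b) :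
    (b - a) * expectedExcess p z η ≤
      (b - η) * expectedExcess p z a + (η - a) * expectedExcess p z b := by
  simp only [expectedExcess, mul_sum, ← sum_add_distrib]
  exact sum_le_sum fun k _ => by
    nlinarith [mul_le_mul_of_nonneg_left (sub_mul_max_sub_zero_le (c := z k) ha hb) (hp k)]

lemma sub_mul_eq (ha : a ≤ η) (hb : η ≤ b) (hz : ∀ k, z k ≤ a ∨ b ≤ z k) :
    (b - a) * expectedExcess p z η =
      (b - η) * expectedExcess p z a + (η - a) * expectedExcess p z b := by
  simp only [expectedExcess, mul_sum, ← sum_add_distrib]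
  refine sum_congr rfl fun k _ => ?_
  linear_combination p k * sub_mul_max_sub_zero_eq ha hb (hz k)

end expectedExcess

lemma exists_bracket {ι : Type*} [Fintype ι] (y : ι → ℝ) (η : ℝ) :
    (∀ k, y k ≤ η) ∨ (∃ j, η ≤ y j ∧ ∀ k, y j ≤ y k) ∨
      ∃ i j, y i ≤ η ∧ η ≤ y j ∧ ∀ k, y k ≤ y i ∨ y j ≤ y k := by
  classical
  by_cases hle : ∀ k, y k ≤ η
  · exact Or.inl hle
  push Not at hle
  obtain ⟨k₀, hk₀⟩ := hle
  obtain ⟨j, hjB, hj⟩ := exists_min_image (univ.filter (η < y ·)) y ⟨k₀, by simpa using hk₀⟩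
  rw [mem_filter] at hjB
  by_cases hbelow : ∃ i, y i ≤ η
  · obtain ⟨i₀, hi₀⟩ := hbelow
    obtain ⟨i, hiA, hi⟩ := exists_max_image (univ.filter (y · ≤ η)) y ⟨i₀, by simpa using hi₀⟩
    rw [mem_filter] at hiA
    refine Or.inr (Or.inr ⟨i, j, hiA.2, hjB.2.le, fun k => ?_⟩)
    rcases le_or_gt (y k) η with hk | hk
    · exact Or.inl (hi k (by simpa using hk))
    · exact Or.inr (hj k (by simpa using hk))
  · push Not at hbelow
    exact Or.inr (Or.inl ⟨j, hjB.2.le, fun k => hj k (by simpa using hbelow k)⟩)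

namespace expectedExcess

variable {ι : Type*} [Fintype ι] {p x y : ι → ℝ}

theorem forall_le_iff_forall_values (hp : ∀ k, 0 ≤ p k) :
    (∀ η, expectedExcess p x η ≤ expectedExcess p y η) ↔
      ∀ j, expectedExcess p x (y j) ≤ expectedExcess p y (y j) := by
  refine ⟨fun h j => h (y j), fun h η => ?_⟩
  rcases exists_bracket y η with hη | ⟨j, hj, hmin⟩ | ⟨i, j, hi, hj, hgap⟩
  · cases isEmpty_or_nonempty ι
    · simp [expectedExcess]
    obtain ⟨j, hmax⟩ := Finite.exists_max y
    calc expectedExcess p x η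
        ≤ expectedExcess p x (y j) := antitone hp (hη j)
      _ ≤ expectedExcess p y (y j) := h j
      _ = expectedExcess p y η := by rw [eq_zero hmax, eq_zero hη]
  · calc expectedExcess p x η
        ≤ expectedExcess p x (y j) + (y j - η) * ∑ k, p k := le_add hp hj
      _ ≤ expectedExcess p y (y j) + (y j - η) * ∑ k, p k := by gcongr; exact h j
      _ = expectedExcess p y η := (eq_add hj hmin).symm
  · rcases (hi.trans hj).eq_or_lt with hij | hij
    · obtain rfl : η = y i := le_antisymm (hij ▸ hj) hi
      exact h i
    refine le_of_mul_le_mul_left ?_ (sub_pos.2 hij)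
    calc (y j - y i) * expectedExcess p x η
        ≤ (y j - η) * expectedExcess p x (y i) + (η - y i) * expectedExcess p x (y j) :=
          sub_mul_le hp hi hj
      _ ≤ (y j - η) * expectedExcess p y (y i) + (η - y i) * expectedExcess p y (y j) :=
          add_le_add (mul_le_mul_of_nonneg_left (h i) (sub_nonneg.2 hj))
            (mul_le_mul_of_nonneg_left (h j) (sub_nonneg.2 hi))
      _ = (y j - y i) * expectedExcess p y η := (sub_mul_eq hi hj hgap).symm

end expectedExcess

theorem stmt_6_general {K : ℕ} (p : Fin K → ℝ) (hp : ∀ k, 0 ≤ p k)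
    (x y : Fin K → ℝ) :
    (∀ η : ℝ, ∑ k, p k * max (x k - η) 0 ≤ ∑ k, p k * max (y k - η) 0) ↔
    (∀ j, ∑ k, p k * max (x k - y j) 0 ≤ ∑ k, p k * max (y k - y j) 0) :=
  expectedExcess.forall_le_iff_forall_values hp

/-- On a finite probability space, the expected-excess (second-order
dominance) inequalities hold for all thresholds `η ∈ ℝ` iff they hold at the
finitely many values `y j` taken by the benchmark `Y`. -/
theorem stmt_6 {K : ℕ} (p : Fin K → ℝ) (hp : ∀ k, 0 ≤ p k)
    (hps : ∑ k, p k = 1) (x y : Fin K → ℝ) :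
    (∀ η : ℝ, ∑ k, p k * max (x k - η) 0 ≤ ∑ k, p k * max (y k - η) 0) ↔
    (∀ j, ∑ k, p k * max (x k - y j) 0 ≤ ∑ k, p k * max (y k - y j) 0) :=
  stmt_6_general p hp x y
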